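/- arXiv:2206.09394 — 2 statements merged into one kernel-verified Lean document; each statement's English description precedes it below -/
import Mathlib

section
/- If (S,T) is an adjoint pair whose counit ε : S∘T → id admits a natural section ξ (i.e. ε∘ξ = id), then the induced monad A = T∘S is separable, i.e. there exists a natural transformation σ : A → A∘A with μ∘σ = id_A and (Aμ)∘(σA) = σ∘μ = (μA)∘(Aσ). -/
open CategoryTheory

/-- If `(S,T)` is an adjoint pair whose counit `ε : S∘T → id` admits a
natural section `ξ` (i.e. `ξ ≫ ε = id`), then the induced monad `A = T∘S` (with
multiplication `μ = TεS`) is separable: there is a natural transformation `σ : A → A∘A`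
with `μ ∘ σ = id_A` and `(Aμ)∘(σA) = σ∘μ = (μA)∘(Aσ)`. -/
theorem separable_monad_of_split_counit {C D : Type*} [Category C] [Category D]
    (S : C ⥤ D) (T : D ⥤ C) (adj : S ⊣ T)
    (ξ : 𝟭 D ⟶ T ⋙ S) (hξ : ∀ Y : D, ξ.app Y ≫ adj.counit.app Y = 𝟙 Y) :
    ∃ σ : S ⋙ T ⟶ (S ⋙ T) ⋙ (S ⋙ T),
      (∀ X : C, σ.app X ≫ T.map (adj.counit.app (S.obj X)) = 𝟙 ((S ⋙ T).obj X)) ∧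
      (∀ X : C, σ.app ((S ⋙ T).obj X) ≫ (S ⋙ T).map (T.map (adj.counit.app (S.obj X)))
          = T.map (adj.counit.app (S.obj X)) ≫ σ.app X) ∧
      (∀ X : C, (S ⋙ T).map (σ.app X) ≫ T.map (adj.counit.app (S.obj ((S ⋙ T).obj X)))
          = T.map (adj.counit.app (S.obj X)) ≫ σ.app X) := by
  refine ⟨{ app := fun X => T.map (ξ.app (S.obj X)), naturality := ?_ }, ?_, ?_, ?_⟩
  · intro X Y f
    dsimp
    rw [← T.map_comp, ← T.map_comp]
    congr 1
    have := ξ.naturality (S.map f)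
    dsimp at this
    exact this
  · intro X
    dsimp
    rw [← T.map_comp, hξ, T.map_id]
  · intro X
    dsimp
    rw [← T.map_comp, ← T.map_comp]
    congr 1
    have := ξ.naturality (adj.counit.app (S.obj X))
    dsimp at this
    exact this.symm
  · intro X
    dsimp
    rw [← T.map_comp, ← T.map_comp]
    congr 1
    have := adj.counit.naturality (ξ.app (S.obj X))
    dsimp at this
    exact this
end

section
/- Let H be an abelian Krull-Schmidt category, S : H → G an additive functor with right adjoint T such that T∘S ≅ ⊕_{i∈I} E_i for self-equivalences E_i of H with E_{i₀} = id. If M is a simple object of H such that E_i M ≇ M for all i ≠ i₀, then End_G(S M) is isomorphic as a ring to End_H(M); in particular End_G(S M) is a division ring and S M is indecomposable. -/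
/-!
By adjunction, `End (S M) ≃ Hom(M, T S M) ≃ ⨁ᵢ Hom(M, Eᵢ M)`, and by Schur's lemma every summand
with `i ≠ i₀` vanishes, since `Eᵢ M` is simple and not isomorphic to `M`. This gives a bijection
`L : End (S M) ≃ End M` with `L (S g ≫ f) = g ≫ L f`, so `L (S g) = g ≫ L 1`. As `L` is
bijective, `L 1 ≠ 0`, hence `L 1` is invertible by Schur's lemma again, and `g ↦ S g` is a
bijective ring homomorphism `End M → End (S M)`. So `End (S M)` is a division ring, has no
idempotents other than `0` and `1`, and `S M` is indecomposable.
-/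

open CategoryTheory CategoryTheory.Limits

universe v u v' u'

def IsKrullSchmidt (C : Type u) [Category.{v} C] [Preadditive C] [HasFiniteBiproducts C] :
    Prop :=
  ∀ X : C, ∃ (n : ℕ) (f : Fin n → C),
    (∀ i, IsLocalRing (End (f i))) ∧ Nonempty (X ≅ ⨁ f)

variable {H : Type u} {G : Type u'} [Category.{v} H] [Category.{v'} G]

section
variable [Abelian H] [HasFiniteBiproducts H] [Preadditive G] [HasFiniteBiproducts G]

instance : HasFiniteProducts (H ⥤ H) := ⟨fun _ => inferInstance⟩

attribute [local instance] HasFiniteBiproducts.of_hasFiniteProducts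
attribute [local instance] hasBinaryBiproducts_of_finite_biproducts

namespace CategoryTheory

variable {C : Type*} [Category* C]

lemma hom_eq_zero_of_isEmpty_iso [Preadditive C] [HasKernels C] {X Y : C} [Simple X] [Simple Y]
    (h : IsEmpty (X ≅ Y)) (f : X ⟶ Y) : f = 0 := by
  by_contra hf
  have := isIso_of_hom_simple hf
  exact h.false (asIso f)

lemma Limits.biproduct.bijective_comp_π [HasZeroMorphisms C] {J : Type*} {f : J → C} [HasBiproduct f]
    {M : C} {j₀ : J} (h : ∀ j ≠ j₀, ∀ g : M ⟶ f j, g = 0) :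
    Function.Bijective fun g : M ⟶ ⨁ f => g ≫ biproduct.π f j₀ := by
  refine ⟨fun g g' hgg' => biproduct.hom_ext _ _ fun j => ?_, fun g => ⟨g ≫ biproduct.ι f j₀, ?_⟩⟩
  · by_cases hj : j = j₀
    · subst hj; exact hgg'
    · rw [h j hj (g ≫ _), h j hj (g' ≫ _)]
  · simp

lemma indecomposable_of_isIdempotentElem [Preadditive C] [HasBinaryBiproducts C] {X : C}
    [Nontrivial (End X)] (h : ∀ e : End X, IsIdempotentElem e → e = 0 ∨ e = 1) :
    Indecomposable X := by
  refine ⟨fun hX => one_ne_zero (α := End X) ((IsZero.iff_id_eq_zero X).1 hX), fun Y Z φ => ?_⟩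
  let e : End X := φ.hom ≫ biprod.fst ≫ biprod.inl ≫ φ.inv
  have hfst : biprod.inl ≫ φ.inv ≫ e ≫ φ.hom ≫ biprod.fst = 𝟙 Y := by simp [e]
  have hsnd : biprod.inr ≫ φ.inv ≫ e ≫ φ.hom ≫ biprod.snd = 0 := by simp [e]
  rcases h e (by simp [IsIdempotentElem, End.mul_def, e]) with he | he
  · left
    rw [IsZero.iff_id_eq_zero, ← hfst, he]
    simp
  · right
    rw [IsZero.iff_id_eq_zero, ← hsnd, he]
    simp [End.one_def]

variable {D : Type*} [Category* D]

def Functor.mapEndRingHom [Preadditive C] [Preadditive D] (F : C ⥤ D) [F.Additive] (X : C) :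
    End X →+* End (F.obj X) :=
  { F.mapEnd X with map_zero' := F.map_zero X X, map_add' := fun _ _ => F.map_add }

lemma Functor.map_bijective_of_simple [Preadditive C] [HasKernels C] [HasZeroMorphisms D]
    (S : C ⥤ D) [S.PreservesZeroMorphisms] {M : C} [Simple M]
    (L : (S.obj M ⟶ S.obj M) → (M ⟶ M)) (hL : Function.Bijective L)
    (hLS : ∀ g f, L (S.map g ≫ f) = g ≫ L f) :
    Function.Bijective (S.map : (M ⟶ M) → (S.obj M ⟶ S.obj M)) := by
  have hmap : ∀ g, L (S.map g) = g ≫ L (𝟙 _) := fun g => by simpa using hLS g (𝟙 _)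
  have hL0 : L 0 = 0 := by simpa using hmap 0
  have : IsIso (L (𝟙 _)) := isIso_of_hom_simple fun hu => by
    obtain ⟨f, hf⟩ := hL.2 (𝟙 M)
    have h1 : 𝟙 (S.obj M) = 0 := hL.1 (hu.trans hL0.symm)
    apply id_nonzero M
    rw [← hf, ← hL0, ← Category.comp_id f, h1, comp_zero]
  refine ⟨fun g g' h => (cancel_mono (L (𝟙 _))).1 ?_,
    fun f => ⟨L f ≫ CategoryTheory.inv (L (𝟙 _)), hL.1 ?_⟩⟩
  · rw [← hmap, ← hmap, h]
  · rw [hmap, Category.assoc, IsIso.inv_hom_id, Category.comp_id]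

end CategoryTheory

theorem clifford_trivial_inertia_simple_general
    (S : H ⥤ G) (T : G ⥤ H) [S.Additive] (adj : S ⊣ T)
    {I : Type} [Fintype I] (E : I → H ⥤ H) (i₀ : I)
    (hE0 : E i₀ = 𝟭 H) (hEq : ∀ i, (E i).IsEquivalence)
    (iso : S ⋙ T ≅ ⨁ E)
    (M : H) (hM : Simple M)
    (hfix : ∀ i, i ≠ i₀ → IsEmpty ((E i).obj M ≅ M)) :
    Nonempty (End (S.obj M) ≃+* End M) ∧
      (Nontrivial (End (S.obj M)) ∧ ∀ f : End (S.obj M), f ≠ 0 → IsUnit f) ∧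
      Indecomposable (S.obj M) := by
  have hzero : ∀ i ≠ i₀, ∀ g : M ⟶ (E i).obj M, g = 0 := fun i hi =>
    have := simple_obj (E i) M
    hom_eq_zero_of_isEmpty_iso ⟨fun e => (hfix i hi).false e.symm⟩
  let e : (S ⋙ T).obj M ≅ ⨁ fun i => (E i).obj M :=
    iso.app M ≪≫ ((evaluation H H).obj M).mapBiproduct E
  let e₀ : (E i₀).obj M ≅ M := eqToIso (by rw [hE0]; rfl)
  let L : (S.obj M ⟶ S.obj M) ≃ (M ⟶ M) :=
    (adj.homEquiv M (S.obj M)).trans <| ((Iso.refl M).homCongr e).trans <|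
      (Equiv.ofBijective _ (biproduct.bijective_comp_π hzero)).trans ((Iso.refl M).homCongr e₀)
  have hLS : ∀ g f, L (S.map g ≫ f) = g ≫ L f := by
    simp [L, adj.homEquiv_naturality_left]
  let Φ : End M ≃+* End (S.obj M) := RingEquiv.ofBijective (S.mapEndRingHom M)
    (S.map_bijective_of_simple L L.bijective hLS)
  have hunit (f : End (S.obj M)) (hf : f ≠ 0) : IsUnit f := by
    simpa using (isUnit_iff_ne_zero.2 ((map_ne_zero_iff _ Φ.symm.injective).2 hf)).map Φ
  have hnontriv : Nontrivial (End (S.obj M)) := Φ.symm.surjective.nontrivial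
  refine ⟨⟨Φ.symm⟩, ⟨hnontriv, hunit⟩, indecomposable_of_isIdempotentElem fun f hf => ?_⟩
  exact or_iff_not_imp_left.2 fun h0 => (IsIdempotentElem.iff_eq_one_of_isUnit (hunit f h0)).1 hf

/-- Let `H` be an abelian Krull-Schmidt category, `S : H → G` an additive
functor with right adjoint `T` such that `T∘S ≅ ⊕_{i∈I} E_i` for self-equivalences `E_i`
of `H` with `E_{i₀} = id`.  If `M` is a simple object of `H` such that `E_i M ≇ M` for all
`i ≠ i₀`, then `End_G(S M)` is isomorphic as a ring to `End_H(M)`; in particular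
`End_G(S M)` is a division ring and `S M` is indecomposable. -/
theorem clifford_trivial_inertia_simple
    (hH : IsKrullSchmidt H)
    (S : H ⥤ G) (T : G ⥤ H) [S.Additive] [T.Additive] (adj : S ⊣ T)
    {I : Type} [Fintype I] (E : I → H ⥤ H) (i₀ : I)
    (hE0 : E i₀ = 𝟭 H) (hEq : ∀ i, (E i).IsEquivalence)
    (iso : S ⋙ T ≅ ⨁ E)
    (M : H) (hM : Simple M)
    (hfix : ∀ i, i ≠ i₀ → IsEmpty ((E i).obj M ≅ M)) :
    Nonempty (End (S.obj M) ≃+* End M) ∧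
      (Nontrivial (End (S.obj M)) ∧ ∀ f : End (S.obj M), f ≠ 0 → IsUnit f) ∧
      Indecomposable (S.obj M) :=
  clifford_trivial_inertia_simple_general S T adj E i₀ hE0 hEq iso M hM hfix

end
end
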